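/- Let B be a branch of T and let A₁,…,A_m be pairwise disjoint memory intervals, each disjoint from B and each partitioned by B. Then each A_i lies in memory strictly between some vertex w of B and its parent w′ on B (i.e., every vertex of A_i comes after w′ and before w in vEB_ε(T)); moreover, for each vertex of B and its parent, at most one of the intervals A_i lies between them in memory. -/

import Mathlib

namespace VEB

inductive OTree : Type where
  | node : List OTree → OTree

def OTree.children : OTree → List OTree
  | .node cs => cs

mutual
  def height : OTree → ℕ
    | .node cs => 1 + heightList cs
  def heightList : List OTree → ℕ
    | [] => 0
    | c :: cs => max (height c) (heightList cs)
end

def subtreeAt? : OTree → List ℕ → Option OTree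
  | t, [] => some t
  | t, i :: p =>
    match t.children[i]? with
    | some c => subtreeAt? c p
    | none => none

/-- `p` is (the path of) a vertex of `t`. -/
def IsVertex (t : OTree) (p : List ℕ) : Prop := (subtreeAt? t p).isSome

/-- `p` is a leaf of `t`. -/
def IsLeaf (t : OTree) (p : List ℕ) : Prop := subtreeAt? t p = some (.node [])

/-- All leaves of `t` are at the same depth (the bottom level). -/
def Uniform (t : OTree) : Prop := ∀ p, IsLeaf t p → p.length + 1 = height t

/-- The top `m+1` levels of `t` (the truncation of height `m+1`). -/
def trunc : ℕ → OTree → OTree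
  | 0, _ => .node []
  | m+1, t => .node (t.children.map (trunc m))

/-- Paths of the vertices at depth `m`, in left-to-right order. -/
def levelPaths : ℕ → OTree → List (List ℕ)
  | 0, _ => [[]]
  | m+1, t => (t.children.zipIdx.map fun ic => (levelPaths m ic.1).map (ic.2 :: ·)).flatten

/-- The level at which a tree of height `h` is cut: `max ⌊ε h⌋ 1`. -/
noncomputable def cutLevel (ε : ℝ) (h : ℕ) : ℕ := max ⌊ε * (h : ℝ)⌋₊ 1

/-- The van Emde Boas order of the vertex paths of `t` (with recursion fuel). -/
noncomputable def vEBAux (ε : ℝ) : ℕ → OTree → List (List ℕ)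
  | 0, _ => []
  | fuel+1, t =>
    if height t ≤ 1 then [[]]
    else
      let m := cutLevel ε (height t)
      vEBAux ε fuel (trunc (m - 1) t) ++
        ((levelPaths m t).map fun q =>
          match subtreeAt? t q with
          | some s => (vEBAux ε fuel s).map (q ++ ·)
          | none => []).flatten

/-- The van Emde Boas order `vEB_ε(t)` of the vertex paths of `t`. -/
noncomputable def vEB (ε : ℝ) (t : OTree) : List (List ℕ) := vEBAux ε (height t) t

/-- Position (index) of vertex `p` in the van Emde Boas order. -/
noncomputable def pos (ε : ℝ) (t : OTree) (p : List ℕ) : ℕ := (vEB ε t).idxOf p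

/-- `A` is a set of vertices occupying consecutive positions in `vEB_ε(t)`. -/
def MemInterval (ε : ℝ) (t : OTree) (A : Set (List ℕ)) : Prop :=
  ∃ i n, A = {p | p ∈ ((vEB ε t).drop i).take n}

/-- The vertices of the decomposition `D` of `t`: pairs `(p, k)` of the root path
and the height of a decomposition subtree (with recursion fuel). -/
noncomputable def decompAux (ε : ℝ) : ℕ → OTree → List (List ℕ × ℕ)
  | 0, _ => []
  | fuel+1, t =>
    if height t ≤ 1 then [([], 1)]
    else
      let m := cutLevel ε (height t)
      ([], height t) ::
        (decompAux ε fuel (trunc (m - 1) t) ++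
          ((levelPaths m t).map fun q =>
            match subtreeAt? t q with
            | some s => (decompAux ε fuel s).map fun r => (q ++ r.1, r.2)
            | none => []).flatten)

/-- The vertices of the decomposition `D` of `t`. -/
noncomputable def decompVerts (ε : ℝ) (t : OTree) : List (List ℕ × ℕ) :=
  decompAux ε (height t) t

/-- The children in the decomposition tree `D` of the decomposition vertex `(p, k)`:
the top tree followed by the bottom trees in left-to-right order. -/
noncomputable def dChildren (ε : ℝ) (t : OTree) (p : List ℕ) (k : ℕ) : List (List ℕ × ℕ) :=
  if k ≤ 1 then []
  else
    match subtreeAt? t p with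
    | some s =>
      (p, cutLevel ε k) ::
        (levelPaths (cutLevel ε k) s).map fun q => (p ++ q, k - cutLevel ε k)
    | none => []

/-- The decomposition subtree `(p, k)` contains the vertex `w` of `t`;
equivalently, the leaf `{w}` of `D` lies in the subtree of `D` rooted at `(p, k)`. -/
def DContains (p : List ℕ) (k : ℕ) (w : List ℕ) : Prop :=
  p <+: w ∧ w.length < p.length + k

/-- Vertex `v` is to the left of the branch with leaf `ℓ`. -/
def LeftOfBranch (v ℓ : List ℕ) : Prop := List.Lex (· < ·) v (ℓ.take v.length)

/-- Vertex `v` is to the right of the branch with leaf `ℓ`. -/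
def RightOfBranch (v ℓ : List ℕ) : Prop := List.Lex (· < ·) (ℓ.take v.length) v

/-- Every internal vertex of `t` has at least `a` children. -/
def MinArity (t : OTree) (a : ℕ) : Prop :=
  ∀ p s, subtreeAt? t p = some s → s.children ≠ [] → a ≤ s.children.length

/-- Every internal vertex of `t` has at most `b` children. -/
def MaxArity (t : OTree) (b : ℕ) : Prop :=
  ∀ p s, subtreeAt? t p = some s → s.children.length ≤ b

/-- `w` lies on the leftmost branch descending from `v` (always taking the leftmost child). -/
def OnLeftmostBranch (v w : List ℕ) : Prop :=
  v <+: w ∧ ∀ n (hn : n < w.length), v.length ≤ n → w.get ⟨n, hn⟩ = 0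

/-- `w` lies on the rightmost branch descending from `v` (always taking the rightmost child). -/
def OnRightmostBranch (t : OTree) (v w : List ℕ) : Prop :=
  v <+: w ∧ ∀ n (hn : n < w.length), v.length ≤ n →
    ∀ s, subtreeAt? t (w.take n) = some s → w.get ⟨n, hn⟩ + 1 = s.children.length

/-!
Along a branch with leaf `ℓ` the van Emde Boas order has a rigid shape (`BranchLayout`): it
starts at the root, between each branch vertex and its child on the branch it lists first a
block of vertices to the right of the branch and then a block of vertices to the left, and after
`ℓ` only vertices to the right follow. The shape survives the recursion because the top tree's
order ends, after its branch leaf, with vertices to the right, and the bottom trees come in the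
order: those to the left of the branch, the one containing it, those to the right.

A memory interval avoiding the branch therefore lies between two consecutive branch vertices, and
if it meets both sides of the branch it contains the last vertex of the right block of its gap.
Two such intervals in the same gap share that vertex.
-/

end VEB

namespace List

section

variable {α : Type*} [BEq α] [LawfulBEq α]

theorem Nodup.mem_middle_iff_idxOf {l l₁ l₂ l₃ : List α} (h : l.Nodup)
    (hl : l = l₁ ++ l₂ ++ l₃) {x : α} :
    x ∈ l₂ ↔ l₁.length ≤ l.idxOf x ∧ l.idxOf x < l₁.length + l₂.length := by
  subst hl
  rw [append_assoc] at h ⊢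
  by_cases h₁ : x ∈ l₁
  · have := idxOf_lt_length_of_mem h₁
    rw [idxOf_append_of_mem h₁]
    refine iff_of_false (fun h₂ => ?_) (by omega)
    exact disjoint_of_nodup_append h h₁ (mem_append_left _ h₂)
  · rw [idxOf_append_of_notMem h₁]
    by_cases h₂ : x ∈ l₂
    · have := idxOf_lt_length_of_mem h₂
      rw [idxOf_append_of_mem h₂]
      exact iff_of_true h₂ (by omega)
    · rw [idxOf_append_of_notMem h₂]
      exact iff_of_false h₂ (by omega)

theorem Nodup.mem_drop_take_iff_idxOf {l : List α} (h : l.Nodup) {a n : ℕ} {x : α} :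
    x ∈ (l.drop a).take n ↔ x ∈ l ∧ a ≤ l.idxOf x ∧ l.idxOf x < a + n := by
  have hl : l = l.take a ++ (l.drop a).take n ++ (l.drop a).drop n := by
    rw [append_assoc, take_append_drop, take_append_drop]
  have key := h.mem_middle_iff_idxOf hl (x := x)
  rw [length_take, length_take, length_drop] at key
  rw [key]
  constructor
  · rintro ⟨h₁, h₂⟩
    have hx : x ∈ l := by
      by_contra hx
      rw [idxOf_of_notMem hx] at h₁ h₂
      omega
    exact ⟨hx, by omega, by omega⟩
  · rintro ⟨hx, h₁, h₂⟩
    have := idxOf_lt_length_of_mem hx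
    omega

end

section

variable {α : Type*}

theorem append_lt_append_of_lt_of_length_eq [LT α] :
    ∀ {a b : List α}, a < b → a.length = b.length → ∀ x y : List α, a ++ x < b ++ y
  | _, _, .cons h, hl, x, y =>
    .cons (append_lt_append_of_lt_of_length_eq h (by simpa using hl) x y)
  | _, _, .rel h, _, _, _ => .rel h

theorem append_lt_append_left_iff [LinearOrder α] {l a b : List α} :
    l ++ a < l ++ b ↔ a < b := by
  refine ⟨fun h => ?_, List.append_left_lt⟩
  by_contra h'
  exact List.not_lt.2 (List.append_left_le (List.not_lt.1 h')) h

end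

end List

namespace VEB

theorem one_le_height (t : OTree) : 1 ≤ height t := by
  cases t with | node cs => rw [height]; omega

theorem height_le_heightList {c : OTree} {cs : List OTree} (h : c ∈ cs) :
    height c ≤ heightList cs := by
  induction cs with
  | nil => cases h
  | cons a as ih =>
    rw [heightList]
    rcases List.mem_cons.1 h with rfl | h
    · exact le_max_left _ _
    · exact (ih h).trans (le_max_right _ _)

theorem heightList_le {cs : List OTree} {n : ℕ} (h : ∀ c ∈ cs, height c ≤ n) :
    heightList cs ≤ n := by
  induction cs with
  | nil => rw [heightList]; omega
  | cons a as ih =>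
    rw [heightList]
    exact max_le (h a List.mem_cons_self) (ih fun c hc => h c (List.mem_cons_of_mem a hc))

theorem subtreeAt?_cons (t : OTree) (i : ℕ) (p : List ℕ) :
    subtreeAt? t (i :: p) = t.children[i]?.bind (subtreeAt? · p) := by
  rw [subtreeAt?]
  cases t.children[i]? <;> rfl

theorem subtreeAt?_append (t : OTree) (p q : List ℕ) :
    subtreeAt? t (p ++ q) = (subtreeAt? t p).bind (subtreeAt? · q) := by
  induction p generalizing t with
  | nil => rfl
  | cons i p ih =>
    rw [List.cons_append, subtreeAt?_cons, subtreeAt?_cons]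
    cases t.children[i]? <;> simp [ih]

theorem height_add_length_le {t s : OTree} {p : List ℕ} (h : subtreeAt? t p = some s) :
    height s + p.length ≤ height t := by
  induction p generalizing t with
  | nil => cases h; simp
  | cons i p ih =>
    rw [subtreeAt?_cons] at h
    obtain ⟨c, hc, hcs⟩ := Option.bind_eq_some_iff.1 h
    have hct := height_le_heightList (List.mem_of_getElem? hc)
    have := ih hcs
    cases t with | node cs =>
      rw [height]
      simp only [OTree.children, List.length_cons] at hct ⊢
      omega

theorem IsVertex.length_lt {t : OTree} {p : List ℕ} (h : IsVertex t p) : p.length < height t := by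
  obtain ⟨s, hs⟩ := Option.isSome_iff_exists.1 h
  have := height_add_length_le hs
  have := one_le_height s
  omega

theorem IsVertex.take {t : OTree} {p : List ℕ} (h : IsVertex t p) (k : ℕ) :
    IsVertex t (p.take k) := by
  rw [IsVertex, ← List.take_append_drop k p, subtreeAt?_append] at h
  exact Option.isSome_of_isSome_bind h

theorem IsLeaf.isVertex {t : OTree} {p : List ℕ} (h : IsLeaf t p) : IsVertex t p := by
  rw [IsVertex, h]; rfl

theorem IsLeaf.append {t s : OTree} {p q : List ℕ} (hs : subtreeAt? t p = some s)
    (hq : IsLeaf s q) : IsLeaf t (p ++ q) := by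
  rw [IsLeaf, subtreeAt?_append, hs, Option.bind_some]
  exact hq

theorem exists_isLeaf (t : OTree) : ∃ q, IsLeaf t q := by
  induction h : height t using Nat.strong_induction_on generalizing t with
  | _ h ih =>
    obtain ⟨_ | ⟨a, as⟩⟩ := t
    · exact ⟨[], rfl⟩
    · have ha := height_le_heightList (c := a) (cs := a :: as) List.mem_cons_self
      rw [height] at h
      obtain ⟨q, hq⟩ := ih (height a) (by omega) a rfl
      exact ⟨0 :: q, hq⟩

theorem Uniform.subtree {t s : OTree} {p : List ℕ} (ht : Uniform t)
    (h : subtreeAt? t p = some s) : Uniform s := by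
  obtain ⟨q, hq⟩ := exists_isLeaf s
  have hq' := ht _ (hq.append h)
  have := height_add_length_le h
  have := hq.isVertex.length_lt
  intro r hr
  have := ht _ (hr.append h)
  simp only [List.length_append] at hq' this
  omega

theorem subtreeAt?_trunc (p : List ℕ) (k : ℕ) (t : OTree) :
    subtreeAt? (trunc k t) p =
      if p.length ≤ k then (subtreeAt? t p).map (trunc (k - p.length)) else none := by
  induction p generalizing k t with
  | nil => simp [subtreeAt?]
  | cons i p ih =>
    cases k with
    | zero => simp [subtreeAt?_cons, trunc, OTree.children]
    | succ k =>
      rw [subtreeAt?_cons, subtreeAt?_cons, trunc, OTree.children, List.getElem?_map]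
      cases t.children[i]? <;> simp [ih]

theorem height_trunc_le (k : ℕ) (t : OTree) : height (trunc k t) ≤ k + 1 := by
  induction k generalizing t with
  | zero => rw [trunc, height, heightList]
  | succ k ih =>
    rw [trunc, height]
    have : heightList (t.children.map (trunc k)) ≤ k + 1 :=
      heightList_le fun c hc => by
        obtain ⟨c', -, rfl⟩ := List.mem_map.1 hc
        exact ih c'
    omega

theorem isVertex_trunc_iff {k : ℕ} {t : OTree} {p : List ℕ} :
    IsVertex (trunc k t) p ↔ p.length ≤ k ∧ IsVertex t p := by
  rw [IsVertex, IsVertex, subtreeAt?_trunc]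
  split_ifs with h <;> simp [h]

theorem isLeaf_trunc_iff {k : ℕ} {t : OTree} {p : List ℕ} :
    IsLeaf (trunc k t) p ↔
      p.length ≤ k ∧ ∃ s, subtreeAt? t p = some s ∧ (p.length = k ∨ s = .node []) := by
  rw [IsLeaf, subtreeAt?_trunc]
  split_ifs with h
  · simp only [h, true_and, Option.map_eq_some_iff]
    refine exists_congr fun s => and_congr_right fun _ => ?_
    obtain ⟨cs⟩ := s
    cases hk : k - p.length <;> cases cs <;> simp [trunc, OTree.children] <;> omega
  · simp [h]

theorem IsLeaf.take_trunc {t : OTree} {ℓ : List ℕ} (hℓ : IsLeaf t ℓ) {k : ℕ}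
    (hk : k ≤ ℓ.length) : IsLeaf (trunc k t) (ℓ.take k) := by
  obtain ⟨s, hs⟩ := Option.isSome_iff_exists.1 (hℓ.isVertex.take k)
  have hlen : (ℓ.take k).length = k := List.length_take_of_le hk
  exact isLeaf_trunc_iff.2 ⟨hlen.le, s, hs, Or.inl hlen⟩

theorem Uniform.trunc {t : OTree} (ht : Uniform t) {k : ℕ} (hk : k < height t) :
    Uniform (trunc k t) := by
  obtain ⟨ℓ, hℓ⟩ := exists_isLeaf t
  have hℓlen := ht ℓ hℓ
  have hkℓ := (hℓ.take_trunc (k := k) (by omega)).isVertex.length_lt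
  have := height_trunc_le k t
  rw [List.length_take_of_le (by omega)] at hkℓ
  intro p hp
  obtain ⟨hpk, s, hs, hleaf⟩ := isLeaf_trunc_iff.1 hp
  rcases hleaf with hleaf | rfl
  · omega
  · have := ht p hs
    omega

theorem mem_levelPaths_iff {m : ℕ} {t : OTree} {p : List ℕ} :
    p ∈ levelPaths m t ↔ p.length = m ∧ IsVertex t p := by
  induction m generalizing t p with
  | zero => cases p <;> simp [levelPaths, IsVertex, subtreeAt?]
  | succ m ih =>
    cases p with
    | nil => simp [levelPaths]
    | cons i p =>
      simp only [levelPaths, List.mem_flatten, List.mem_map, Prod.exists,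
        List.mk_mem_zipIdx_iff_getElem?, IsVertex, subtreeAt?_cons]
      rcases hc : t.children[i]? with _ | c <;> simp [hc, ih, IsVertex]

theorem pairwise_lt_levelPaths (m : ℕ) (t : OTree) : (levelPaths m t).Pairwise (· < ·) := by
  induction m generalizing t with
  | zero => simp [levelPaths]
  | succ m ih =>
    rw [levelPaths, List.pairwise_flatten]
    refine ⟨?_, ?_⟩
    · simp only [List.mem_map]
      rintro _ ⟨c, -, rfl⟩
      exact List.pairwise_map.2 ((ih c.1).imp List.Lex.cons)
    · rw [List.pairwise_map, List.pairwise_iff_getElem]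
      intro a b ha hb hab x hx y hy
      simp only [List.getElem_zipIdx, List.mem_map] at hx hy
      obtain ⟨x, -, rfl⟩ := hx
      obtain ⟨y, -, rfl⟩ := hy
      exact List.Lex.rel (by omega)

theorem LeftOfBranch.not_rightOfBranch {v ℓ : List ℕ} (h : LeftOfBranch v ℓ) :
    ¬ RightOfBranch v ℓ :=
  List.lt_asymm h

theorem not_leftOfBranch_self (ℓ : List ℕ) : ¬ LeftOfBranch ℓ ℓ := by
  simp [LeftOfBranch]

theorem leftOfBranch_take_iff {v ℓ : List ℕ} {c : ℕ} (hv : v.length ≤ c) :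
    LeftOfBranch v (ℓ.take c) ↔ LeftOfBranch v ℓ := by
  rw [LeftOfBranch, LeftOfBranch, List.take_take, min_eq_left hv]

theorem rightOfBranch_take_iff {v ℓ : List ℕ} {c : ℕ} (hv : v.length ≤ c) :
    RightOfBranch v (ℓ.take c) ↔ RightOfBranch v ℓ := by
  rw [RightOfBranch, RightOfBranch, List.take_take, min_eq_left hv]

theorem leftOfBranch_take_append_iff {v ℓ : List ℕ} {m : ℕ} (hm : m ≤ ℓ.length) :
    LeftOfBranch (ℓ.take m ++ v) ℓ ↔ LeftOfBranch v (ℓ.drop m) := by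
  rw [LeftOfBranch, LeftOfBranch, List.length_append, List.length_take_of_le hm, List.take_add]
  exact List.append_lt_append_left_iff

theorem rightOfBranch_take_append_iff {v ℓ : List ℕ} {m : ℕ} (hm : m ≤ ℓ.length) :
    RightOfBranch (ℓ.take m ++ v) ℓ ↔ RightOfBranch v (ℓ.drop m) := by
  rw [RightOfBranch, RightOfBranch, List.length_append, List.length_take_of_le hm, List.take_add]
  exact List.append_lt_append_left_iff

theorem leftOfBranch_append {q v ℓ : List ℕ} (hm : q.length ≤ ℓ.length)
    (hq : q < ℓ.take q.length) : LeftOfBranch (q ++ v) ℓ := by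
  rw [LeftOfBranch, List.length_append, List.take_add]
  exact List.append_lt_append_of_lt_of_length_eq hq (List.length_take_of_le hm).symm _ _

theorem rightOfBranch_append {q v ℓ : List ℕ} (hm : q.length ≤ ℓ.length)
    (hq : ℓ.take q.length < q) : RightOfBranch (q ++ v) ℓ := by
  rw [RightOfBranch, List.length_append, List.take_add]
  exact List.append_lt_append_of_lt_of_length_eq hq (List.length_take_of_le hm) _ _

inductive BranchLayout (ℓ : List ℕ) : ℕ → List (List ℕ) → Prop
  | leaf {T : List (List ℕ)} (hT : ∀ v ∈ T, RightOfBranch v ℓ) :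
      BranchLayout ℓ ℓ.length (ℓ :: T)
  | step {d : ℕ} {R L xs : List (List ℕ)} (hd : d < ℓ.length)
      (hR : ∀ v ∈ R, RightOfBranch v ℓ) (hL : ∀ v ∈ L, LeftOfBranch v ℓ)
      (h : BranchLayout ℓ (d + 1) xs) :
      BranchLayout ℓ d (ℓ.take d :: (R ++ (L ++ xs)))

namespace BranchLayout

variable {ℓ : List ℕ} {d : ℕ} {xs : List (List ℕ)}

theorem append_right (h : BranchLayout ℓ d xs) {T : List (List ℕ)}
    (hT : ∀ v ∈ T, RightOfBranch v ℓ) : BranchLayout ℓ d (xs ++ T) := by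
  induction h with
  | leaf hT' => exact leaf fun v hv => (List.mem_append.1 hv).elim (hT' v) (hT v)
  | step hd hR hL _ ih => simpa using step hd hR hL ih

theorem map_take_append {m : ℕ} (hm : m ≤ ℓ.length) {ys : List (List ℕ)}
    (h : BranchLayout (ℓ.drop m) d ys) :
    BranchLayout ℓ (m + d) (ys.map (ℓ.take m ++ ·)) := by
  induction h with
  | leaf hT =>
    rw [List.map_cons, List.take_append_drop, List.length_drop, Nat.add_sub_cancel' hm]
    refine leaf fun v hv => ?_
    obtain ⟨w, hw, rfl⟩ := List.mem_map.1 hv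
    exact (rightOfBranch_take_append_iff hm).2 (hT w hw)
  | @step d R L xs hd hR hL _ ih =>
    rw [List.length_drop] at hd
    rw [List.map_cons, List.map_append, List.map_append, ← List.take_add]
    refine step (by omega) (fun v hv => ?_) (fun v hv => ?_) ih
    · obtain ⟨w, hw, rfl⟩ := List.mem_map.1 hv
      exact (rightOfBranch_take_append_iff hm).2 (hR w hw)
    · obtain ⟨w, hw, rfl⟩ := List.mem_map.1 hv
      exact (leftOfBranch_take_append_iff hm).2 (hL w hw)

theorem splice {c : ℕ} (hc : c < ℓ.length) (h : BranchLayout (ℓ.take c) d xs)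
    (hxs : ∀ v ∈ xs, v.length ≤ c) {L ys : List (List ℕ)}
    (hL : ∀ v ∈ L, LeftOfBranch v ℓ)
    (hys : BranchLayout ℓ (c + 1) ys) : BranchLayout ℓ d (xs ++ (L ++ ys)) := by
  have hcℓ : (ℓ.take c).length = c := List.length_take_of_le hc.le
  induction h with
  | leaf hT =>
    rw [hcℓ, List.cons_append]
    exact step hc (fun v hv => (rightOfBranch_take_iff (hxs v (by simp [hv]))).1 (hT v hv))
      hL hys
  | @step d R L' xs hd hR hL' _ ih =>
    rw [hcℓ] at hd
    rw [List.take_take, min_eq_left hd.le]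
    simpa using step (by omega)
      (fun v hv => (rightOfBranch_take_iff (hxs v (by simp [hv]))).1 (hR v hv))
      (fun v hv => (leftOfBranch_take_iff (hxs v (by simp [hv]))).1 (hL' v hv))
      (ih fun v hv => hxs v (by simp [hv]))

theorem exists_eq_cons (h : BranchLayout ℓ d xs) : ∃ tl, xs = ℓ.take d :: tl := by
  cases h with
  | leaf => exact ⟨_, by rw [List.take_length]⟩
  | step => exact ⟨_, rfl⟩

theorem exists_eq_append (h : BranchLayout ℓ d xs) {e : ℕ} (hde : d ≤ e)
    (he : e ≤ ℓ.length) :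
    ∃ pre suf, xs = pre ++ suf ∧ BranchLayout ℓ e suf := by
  induction h with
  | leaf hT => exact ⟨[], _, rfl, le_antisymm he hde ▸ leaf hT⟩
  | @step d R L xs hd hR hL h ih =>
    rcases hde.eq_or_lt with rfl | hlt
    · exact ⟨[], _, rfl, step hd hR hL h⟩
    · obtain ⟨pre, suf, rfl, hsuf⟩ := ih hlt
      exact ⟨ℓ.take d :: (R ++ (L ++ pre)), suf, by simp, hsuf⟩

end BranchLayout

namespace BranchLayout

variable {ℓ : List ℕ} {d : ℕ} {xs : List (List ℕ)}

theorem le_length (h : BranchLayout ℓ d xs) : d ≤ ℓ.length := by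
  cases h <;> omega

theorem take_mem (h : BranchLayout ℓ d xs) {e : ℕ} (hde : d ≤ e) (he : e ≤ ℓ.length) :
    ℓ.take e ∈ xs := by
  obtain ⟨pre, suf, rfl, hsuf⟩ := h.exists_eq_append hde he
  obtain ⟨tl, rfl⟩ := hsuf.exists_eq_cons
  simp

theorem idxOf_lt_idxOf_leaf (hN : xs.Nodup) (h : BranchLayout ℓ d xs) {u : List ℕ}
    (hu : u ∈ xs) (huL : LeftOfBranch u ℓ) : xs.idxOf u < xs.idxOf ℓ := by
  obtain ⟨pre, suf, rfl, hsuf⟩ := h.exists_eq_append h.le_length le_rfl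
  cases hsuf with
  | step hd => omega
  | @leaf T hT =>
    have hupre : u ∈ pre := by
      rcases List.mem_append.1 hu with hu | hu
      · exact hu
      rcases List.mem_cons.1 hu with rfl | hu
      · exact absurd huL (not_leftOfBranch_self u)
      · exact absurd (hT u hu) huL.not_rightOfBranch
    have := (hN.mem_middle_iff_idxOf (l₁ := []) (l₃ := ℓ :: T) (by simp)).1 hupre
    have := (hN.mem_middle_iff_idxOf (l₁ := pre) (l₂ := [ℓ]) (l₃ := T) (by simp)).1
      (List.mem_singleton_self ℓ)
    simp only [List.length_nil, List.length_singleton] at *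
    omega

theorem idxOf_right_lt_idxOf_left (hN : xs.Nodup) (h : BranchLayout ℓ d xs) {e : ℕ}
    (hde : d ≤ e) (he : e < ℓ.length) {u v : List ℕ}
    (huL : LeftOfBranch u ℓ) (hvR : RightOfBranch v ℓ)
    (hu : xs.idxOf (ℓ.take e) < xs.idxOf u ∧ xs.idxOf u < xs.idxOf (ℓ.take (e + 1)))
    (hv : xs.idxOf (ℓ.take e) < xs.idxOf v ∧ xs.idxOf v < xs.idxOf (ℓ.take (e + 1))) :
    xs.idxOf v < xs.idxOf u := by
  obtain ⟨pre, suf, rfl, hsuf⟩ := h.exists_eq_append hde he.le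
  cases hsuf with
  | leaf => omega
  | @step _ R L ys _ hR hL hys =>
    obtain ⟨tl, rfl⟩ := hys.exists_eq_cons
    have hw := (hN.mem_middle_iff_idxOf (l₁ := pre) (l₂ := [ℓ.take e])
      (l₃ := R ++ L ++ ℓ.take (e + 1) :: tl) (by simp)).1 (List.mem_singleton_self _)
    have hw' := (hN.mem_middle_iff_idxOf (l₁ := pre ++ ℓ.take e :: (R ++ L))
      (l₂ := [ℓ.take (e + 1)]) (l₃ := tl) (by simp)).1 (List.mem_singleton_self _)
    have hgap := fun x => hN.mem_middle_iff_idxOf (l₁ := pre ++ [ℓ.take e]) (l₂ := R ++ L)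
      (l₃ := ℓ.take (e + 1) :: tl) (by simp) (x := x)
    simp only [List.length_append, List.length_cons, List.length_nil] at hw hw' hgap
    have huL' : u ∈ L := by
      rcases List.mem_append.1 ((hgap u).2 (by omega)) with hu | hu
      · exact absurd (hR u hu) huL.not_rightOfBranch
      · exact hu
    have hvR' : v ∈ R := by
      rcases List.mem_append.1 ((hgap v).2 (by omega)) with hv | hv
      · exact hv
      · exact absurd hvR (hL v hv).not_rightOfBranch
    have := (hN.mem_middle_iff_idxOf (l₁ := pre ++ ℓ.take e :: R) (l₂ := L)
      (l₃ := ℓ.take (e + 1) :: tl) (by simp)).1 huL'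
    have := (hN.mem_middle_iff_idxOf (l₁ := pre ++ [ℓ.take e]) (l₂ := R)
      (l₃ := L ++ ℓ.take (e + 1) :: tl) (by simp)).1 hvR'
    simp only [List.length_append, List.length_cons, List.length_nil] at *
    omega

end BranchLayout

theorem cutLevel_lt {ε : ℝ} (hε : ε < 1) {h : ℕ} (hh : 2 ≤ h) : cutLevel ε h < h := by
  have hpos : (0 : ℝ) < h := by positivity
  refine max_lt ((Nat.floor_lt' (by omega)).2 ?_) (by omega)
  nlinarith

noncomputable def bottomBlock (ε : ℝ) (fuel : ℕ) (t : OTree) (q : List ℕ) :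
    List (List ℕ) :=
  match subtreeAt? t q with
  | some s => (vEBAux ε fuel s).map (q ++ ·)
  | none => []

theorem vEBAux_succ (ε : ℝ) (fuel : ℕ) {t : OTree} (h : 1 < height t) :
    vEBAux ε (fuel + 1) t =
      vEBAux ε fuel (trunc (cutLevel ε (height t) - 1) t) ++
        ((levelPaths (cutLevel ε (height t)) t).map (bottomBlock ε fuel t)).flatten := by
  rw [vEBAux, if_neg (by omega)]
  rfl

theorem bottomBlock_eq {ε : ℝ} {fuel : ℕ} {t s : OTree} {q : List ℕ}
    (h : subtreeAt? t q = some s) : bottomBlock ε fuel t q = (vEBAux ε fuel s).map (q ++ ·) := by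
  rw [bottomBlock, h]

theorem mem_bottomBlock {ε : ℝ} {fuel : ℕ} {t : OTree} {q x : List ℕ}
    (h : x ∈ bottomBlock ε fuel t q) :
    ∃ s r, subtreeAt? t q = some s ∧ r ∈ vEBAux ε fuel s ∧ x = q ++ r := by
  rw [bottomBlock] at h
  split at h
  · obtain ⟨r, hr, rfl⟩ := List.mem_map.1 h
    exact ⟨_, r, ‹_›, hr, rfl⟩
  · cases h

theorem exists_append_of_mem_flatten_bottomBlock {ε : ℝ} {fuel : ℕ} {t : OTree}
    {P : List (List ℕ)} {x : List ℕ} (h : x ∈ (P.map (bottomBlock ε fuel t)).flatten) :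
    ∃ q ∈ P, ∃ r, x = q ++ r := by
  obtain ⟨_, hblk, hx⟩ := List.mem_flatten.1 h
  obtain ⟨q, hq, rfl⟩ := List.mem_map.1 hblk
  obtain ⟨s, r, -, -, rfl⟩ := mem_bottomBlock hx
  exact ⟨q, hq, r, rfl⟩

theorem isVertex_of_mem_vEBAux {ε : ℝ} {fuel : ℕ} {t : OTree} {p : List ℕ}
    (hp : p ∈ vEBAux ε fuel t) : IsVertex t p := by
  induction fuel generalizing t p with
  | zero => cases hp
  | succ fuel ih =>
    by_cases h1 : height t ≤ 1
    · rw [vEBAux, if_pos h1, List.mem_singleton] at hp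
      subst hp
      rfl
    rw [vEBAux_succ ε fuel (by omega), List.mem_append, List.mem_flatten] at hp
    rcases hp with hp | ⟨_, hblk, hp⟩
    · exact (isVertex_trunc_iff.1 (ih hp)).2
    · obtain ⟨q, -, rfl⟩ := List.mem_map.1 hblk
      obtain ⟨s, r, hs, hr, rfl⟩ := mem_bottomBlock hp
      rw [IsVertex, subtreeAt?_append, hs, Option.bind_some]
      exact ih hr

theorem nodup_vEBAux (ε : ℝ) (fuel : ℕ) (t : OTree) : (vEBAux ε fuel t).Nodup := by
  induction fuel generalizing t with
  | zero => exact List.nodup_nil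
  | succ fuel ih =>
    by_cases h1 : height t ≤ 1
    · rw [vEBAux, if_pos h1]
      exact List.nodup_singleton _
    rw [vEBAux_succ ε fuel (by omega)]
    set m := cutLevel ε (height t)
    refine List.nodup_append.2 ⟨ih _, List.nodup_flatten.2 ⟨?_, ?_⟩, ?_⟩
    · intro blk hblk
      obtain ⟨q, -, rfl⟩ := List.mem_map.1 hblk
      rw [bottomBlock]
      split
      · exact (ih _).map fun _ _ => List.append_cancel_left
      · exact List.nodup_nil
    · rw [List.pairwise_map]
      refine (pairwise_lt_levelPaths m t).imp_of_mem fun hq₁ hq₂ hlt x hx₁ hx₂ => ?_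
      obtain ⟨-, r₁, -, -, rfl⟩ := mem_bottomBlock hx₁
      obtain ⟨-, r₂, -, -, hr⟩ := mem_bottomBlock hx₂
      have hq := (List.append_inj hr (by rw [(mem_levelPaths_iff.1 hq₁).1,
        (mem_levelPaths_iff.1 hq₂).1])).1
      exact List.lt_irrefl _ (hq ▸ hlt)
    · rintro x hx₁ _ hx₂ rfl
      have := (isVertex_trunc_iff.1 (isVertex_of_mem_vEBAux hx₁)).1
      obtain ⟨q, hq, r, rfl⟩ := exists_append_of_mem_flatten_bottomBlock hx₂
      have := (mem_levelPaths_iff.1 hq).1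
      have : 1 ≤ m := le_max_right _ _
      simp only [List.length_append] at *
      omega

theorem exists_levelPaths_eq_append_cons {t : OTree} {ℓ : List ℕ} {m : ℕ}
    (hm : m ≤ ℓ.length) (hv : IsVertex t (ℓ.take m)) :
    ∃ P₁ P₂, levelPaths m t = P₁ ++ ℓ.take m :: P₂ ∧
      (∀ q ∈ P₁, ∀ r, LeftOfBranch (q ++ r) ℓ) ∧
      (∀ q ∈ P₂, ∀ r, RightOfBranch (q ++ r) ℓ) := by
  have hlen : (ℓ.take m).length = m := List.length_take_of_le hm
  obtain ⟨P₁, P₂, hP⟩ := List.append_of_mem (mem_levelPaths_iff.2 ⟨hlen, hv⟩)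
  have hsorted := pairwise_lt_levelPaths m t
  rw [hP, List.pairwise_append, List.pairwise_cons] at hsorted
  have hqlen : ∀ q ∈ P₁ ++ ℓ.take m :: P₂, q.length = m := fun q hq =>
    (mem_levelPaths_iff.1 (hP ▸ hq)).1
  refine ⟨P₁, P₂, hP, fun q hq r => ?_, fun q hq r => ?_⟩
  · have hq' := hqlen q (by simp [hq])
    exact leftOfBranch_append (by omega) (hq' ▸ hsorted.2.2 q hq _ List.mem_cons_self)
  · have hq' := hqlen q (by simp [hq])
    exact rightOfBranch_append (by omega) (hq' ▸ hsorted.2.1.1 q hq)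

theorem branchLayout_vEBAux {ε : ℝ} (hε : ε < 1) {fuel : ℕ} {t : OTree} {ℓ : List ℕ}
    (hfuel : height t ≤ fuel) (ht : Uniform t) (hℓ : IsLeaf t ℓ) :
    BranchLayout ℓ 0 (vEBAux ε fuel t) := by
  induction fuel generalizing t ℓ with
  | zero => have := one_le_height t; omega
  | succ fuel ih =>
    have hℓlen := ht ℓ hℓ
    by_cases h1 : height t ≤ 1
    · obtain rfl : ℓ = [] := List.eq_nil_of_length_eq_zero (by omega)
      rw [vEBAux, if_pos h1]
      exact .leaf (by simp)
    rw [vEBAux_succ ε fuel (by omega)]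
    set m := cutLevel ε (height t)
    have hm1 : 1 ≤ m := le_max_right _ _
    have hmh : m < height t := cutLevel_lt hε (by omega)
    have htop : BranchLayout (ℓ.take (m - 1)) 0 (vEBAux ε fuel (trunc (m - 1) t)) :=
      ih (by have := height_trunc_le (m - 1) t; omega) (ht.trunc (by omega))
        (hℓ.take_trunc (by omega))
    obtain ⟨s, hs⟩ := Option.isSome_iff_exists.1 (hℓ.isVertex.take m)
    have hsℓ : IsLeaf s (ℓ.drop m) := by
      have := subtreeAt?_append t (ℓ.take m) (ℓ.drop m)
      rw [List.take_append_drop, hs, Option.bind_some] at this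
      exact this.symm.trans hℓ
    have hbranch : BranchLayout (ℓ.drop m) 0 (vEBAux ε fuel s) :=
      ih (by have := height_add_length_le hs; rw [List.length_take_of_le (by omega)] at this; omega)
        (ht.subtree hs) hsℓ
    obtain ⟨P₁, P₂, hP, hP₁, hP₂⟩ :=
      exists_levelPaths_eq_append_cons (by omega) (hℓ.isVertex.take m)
    rw [hP, List.map_append, List.map_cons, List.flatten_append, List.flatten_cons,
      bottomBlock_eq hs]
    refine htop.splice (by omega)
      (fun v hv => (isVertex_trunc_iff.1 (isVertex_of_mem_vEBAux hv)).1) (fun v hv => ?_) ?_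
    · obtain ⟨q, hq, r, rfl⟩ := exists_append_of_mem_flatten_bottomBlock hv
      exact hP₁ q hq r
    · rw [Nat.sub_add_cancel hm1]
      refine (hbranch.map_take_append (by omega)).append_right fun v hv => ?_
      obtain ⟨q, hq, r, rfl⟩ := exists_append_of_mem_flatten_bottomBlock hv
      exact hP₂ q hq r

namespace BranchLayout

variable {ℓ : List ℕ} {xs : List (List ℕ)}

theorem exists_between_of_window (hN : xs.Nodup) (h : BranchLayout ℓ 0 xs) {A : Set (List ℕ)}
    (hA : ∃ a n, A = {p | p ∈ (xs.drop a).take n}) (hB : ∀ p ∈ A, ¬ p <+: ℓ)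
    (hleft : ∃ p ∈ A, LeftOfBranch p ℓ) :
    ∃ d < ℓ.length, ∀ p ∈ A,
      xs.idxOf (ℓ.take d) < xs.idxOf p ∧ xs.idxOf p < xs.idxOf (ℓ.take (d + 1)) := by
  obtain ⟨a, n, rfl⟩ := hA
  obtain ⟨u, huA, huL⟩ := hleft
  obtain ⟨hu, hau, hun⟩ := hN.mem_drop_take_iff_idxOf.1 huA
  have houtside : ∀ e ≤ ℓ.length,
      xs.idxOf (ℓ.take e) < a ∨ a + n ≤ xs.idxOf (ℓ.take e) := by
    intro e he
    by_contra! hin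
    exact hB _ (hN.mem_drop_take_iff_idxOf.2 ⟨h.take_mem (Nat.zero_le e) he, hin⟩)
      (List.take_prefix e ℓ)
  have hroot : xs.idxOf (ℓ.take 0) < a := by
    obtain ⟨tl, htl⟩ := h.exists_eq_cons
    have := houtside 0 (Nat.zero_le _)
    rw [htl, List.idxOf_cons_self] at this ⊢
    omega
  obtain ⟨d, hd, hdℓ, hmax⟩ : ∃ d, xs.idxOf (ℓ.take d) < a ∧ d ≤ ℓ.length ∧
      ∀ e, d < e → e ≤ ℓ.length → ¬ xs.idxOf (ℓ.take e) < a :=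
    ⟨_, Nat.findGreatest_spec (P := fun e => xs.idxOf (ℓ.take e) < a) (Nat.zero_le _) hroot,
      Nat.findGreatest_le _, fun _ => Nat.findGreatest_is_greatest⟩
  have hdℓ : d < ℓ.length := by
    refine hdℓ.lt_of_ne fun hdℓ => ?_
    have := h.idxOf_lt_idxOf_leaf hN hu huL
    rw [hdℓ, List.take_length] at hd
    omega
  have hd' := (houtside (d + 1) hdℓ).resolve_left (hmax (d + 1) (Nat.lt_succ_self d) hdℓ)
  refine ⟨d, hdℓ, fun p hp => ?_⟩
  have := hN.mem_drop_take_iff_idxOf.1 hp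
  omega

theorem not_disjoint_of_between (hN : xs.Nodup) (h : BranchLayout ℓ 0 xs) {d : ℕ}
    (hd : d < ℓ.length) {A A' : Set (List ℕ)}
    (hA : ∃ a n, A = {p | p ∈ (xs.drop a).take n})
    (hA' : ∃ a n, A' = {p | p ∈ (xs.drop a).take n})
    (hsides : (∃ p ∈ A, LeftOfBranch p ℓ) ∧ (∃ p ∈ A, RightOfBranch p ℓ))
    (hsides' : (∃ p ∈ A', LeftOfBranch p ℓ) ∧ (∃ p ∈ A', RightOfBranch p ℓ))
    (hbetween : ∀ p ∈ A,
      xs.idxOf (ℓ.take d) < xs.idxOf p ∧ xs.idxOf p < xs.idxOf (ℓ.take (d + 1)))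
    (hbetween' : ∀ p ∈ A',
      xs.idxOf (ℓ.take d) < xs.idxOf p ∧ xs.idxOf p < xs.idxOf (ℓ.take (d + 1))) :
    ¬ Disjoint A A' := by
  obtain ⟨a, n, rfl⟩ := hA
  obtain ⟨a', n', rfl⟩ := hA'
  obtain ⟨⟨u, huA, huL⟩, ⟨v, hvA, hvR⟩⟩ := hsides
  obtain ⟨⟨u', huA', huL'⟩, ⟨v', hvA', hvR'⟩⟩ := hsides'
  have := h.idxOf_right_lt_idxOf_left hN (Nat.zero_le d) hd huL hvR' (hbetween u huA)
    (hbetween' v' hvA')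
  have := h.idxOf_right_lt_idxOf_left hN (Nat.zero_le d) hd huL' hvR (hbetween' u' huA')
    (hbetween v hvA)
  have hu := hN.mem_drop_take_iff_idxOf.1 huA
  have hv := hN.mem_drop_take_iff_idxOf.1 hvA
  have hu' := hN.mem_drop_take_iff_idxOf.1 huA'
  have hv' := hN.mem_drop_take_iff_idxOf.1 hvA'
  rw [Set.not_disjoint_iff]
  rcases le_total (xs.idxOf v) (xs.idxOf v') with hle | hle
  · exact ⟨v', hN.mem_drop_take_iff_idxOf.2 ⟨hv'.1, by omega, by omega⟩, hvA'⟩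
  · exact ⟨v, hvA, hN.mem_drop_take_iff_idxOf.2 ⟨hv.1, by omega, by omega⟩⟩

end BranchLayout

/-- Let `B` be a branch (with leaf `ℓ`) and `A 0, …, A (m-1)` pairwise
disjoint memory intervals, each disjoint from `B` and each partitioned by `B`. Then each
`A i` lies in memory strictly between some vertex `ℓ.take (d+1)` of `B` and its parent
`ℓ.take d`, and for each vertex of `B` and its parent, at most one `A i` lies between
them in memory. -/
theorem intervals_between_branch_edges
    (ε : ℝ) (hε0 : 0 < ε) (hε1 : ε ≤ 1/2) (t : OTree) (ht : Uniform t)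
    (ℓ : List ℕ) (hℓ : IsLeaf t ℓ)
    (m : ℕ) (A : ℕ → Set (List ℕ))
    (hmem : ∀ i < m, MemInterval ε t (A i))
    (hdisjB : ∀ i < m, ∀ p ∈ A i, ¬ p <+: ℓ)
    (hdisjA : ∀ i < m, ∀ j < m, i ≠ j → Disjoint (A i) (A j))
    (hpart : ∀ i < m, (∃ p ∈ A i, LeftOfBranch p ℓ) ∧ (∃ p ∈ A i, RightOfBranch p ℓ)) :
    (∀ i < m, ∃ d < ℓ.length, ∀ p ∈ A i,
        pos ε t (ℓ.take d) < pos ε t p ∧ pos ε t p < pos ε t (ℓ.take (d + 1))) ∧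
    (∀ d < ℓ.length, ∀ i < m, ∀ j < m,
        (∀ p ∈ A i, pos ε t (ℓ.take d) < pos ε t p ∧ pos ε t p < pos ε t (ℓ.take (d + 1))) →
        (∀ p ∈ A j, pos ε t (ℓ.take d) < pos ε t p ∧ pos ε t p < pos ε t (ℓ.take (d + 1))) →
        i = j) := by
  have hN : (vEB ε t).Nodup := nodup_vEBAux ε _ t
  have hB : BranchLayout ℓ 0 (vEB ε t) := branchLayout_vEBAux (by linarith) le_rfl ht hℓ
  refine ⟨fun i hi => hB.exists_between_of_window hN (hmem i hi) (hdisjB i hi) (hpart i hi).1,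
    fun d hd i hi j hj hAi hAj => ?_⟩
  by_contra hij
  exact hB.not_disjoint_of_between hN hd (hmem i hi) (hmem j hj) (hpart i hi) (hpart j hj) hAi hAj
    (hdisjA i hi j hj hij)

end VEB
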